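/- arXiv:1707.06590 — 2 statements merged into one kernel-verified Lean document; each statement's English description precedes it below -/
import Mathlib

section
/- For all positive integers i and j with i ≥ j, r_{i, i−j+1} = r_{i−1,i−1} + r_{i−1,i−2} + ⋯ + r_{i−1,i−j}, i.e. r_{i, i−j+1} = ∑_{m=i−j}^{i−1} r_{i−1, m}. -/
/-!
Writing `u = xC(x)`, the Catalan equation `C = 1 + xC²` becomes `u = x + u²`. Multiplying by
`u^j` and comparing coefficients of `x^(i+1)` gives `r(i+1, j+1) = r(i, j) + r(i+1, j+2)`.
Unrolling this in `j` until the second index exceeds the first, where `r` vanishes since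
`u^m` starts at `x^m`, telescopes to the claimed sum.
-/

open PowerSeries Finset

/-- The generating function of the Catalan numbers. -/
noncomputable def catalanGF : PowerSeries ℝ :=
  PowerSeries.mk fun n => (catalan n : ℝ)

/-- `r i j` is the coefficient of `x^i` in `(xC(x))^j`, i.e. the `(i,j)` entry of
`D(𝔽^S)⁻¹D`. -/
noncomputable def rEntry (i j : ℕ) : ℝ :=
  PowerSeries.coeff i ((PowerSeries.X * catalanGF) ^ j)

lemma catalanGF_eq_one_add_X_mul_sq : catalanGF = 1 + X * catalanGF ^ 2 := by
  ext (_ | n)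
  · simp [catalanGF]
  · rw [map_add, coeff_succ_X_mul, coeff_one, if_neg n.succ_ne_zero, zero_add, sq, coeff_mul]
    simp only [catalanGF, coeff_mk, catalan_succ', Nat.cast_sum, Nat.cast_mul]

lemma X_mul_catalanGF_eq : X * catalanGF = X + (X * catalanGF) ^ 2 := by
  nth_rewrite 1 [catalanGF_eq_one_add_X_mul_sq]
  ring

lemma rEntry_eq_zero_of_lt {i m : ℕ} (h : i < m) : rEntry i m = 0 := by
  rw [rEntry, mul_pow, coeff_X_pow_mul', if_neg h.not_ge]

lemma rEntry_succ_succ (i j : ℕ) :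
    rEntry (i + 1) (j + 1) = rEntry i j + rEntry (i + 1) (j + 2) := by
  have h : (X * catalanGF) ^ (j + 1) = X * (X * catalanGF) ^ j + (X * catalanGF) ^ (j + 2) := by
    rw [pow_succ]
    nth_rewrite 2 [X_mul_catalanGF_eq]
    ring
  rw [rEntry, h, map_add, coeff_succ_X_mul, rEntry, rEntry]

lemma rEntry_succ_succ_eq_sum_Icc {a b : ℕ} (hb : b ≤ a + 1) :
    rEntry (a + 1) (b + 1) = ∑ m ∈ Icc b a, rEntry a m := by
  induction hb using Nat.decreasingInduction with
  | self => rw [rEntry_eq_zero_of_lt (by omega), Icc_eq_empty (by omega), sum_empty]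
  | of_succ k hk ih =>
    rw [rEntry_succ_succ, ih, Icc_add_one_left_eq_Ioc, add_sum_Ioc_eq_sum_Icc (by omega)]

/-- For positive integers `i ≥ j`,
`r_{i,i−j+1} = r_{i−1,i−1} + r_{i−1,i−2} + ⋯ + r_{i−1,i−j}`. -/
theorem stmt_6 (i j : ℕ) (hj : 1 ≤ j) (hij : j ≤ i) :
    rEntry i (i - j + 1) = ∑ m ∈ Finset.Icc (i - j) (i - 1), rEntry (i - 1) m := by
  obtain ⟨a, rfl⟩ : ∃ a, i = a + 1 := ⟨i - 1, by omega⟩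
  exact rEntry_succ_succ_eq_sum_Icc (by omega)
end

section
/- For all n ≥ 1, q_{n1} = (2n−1)·C_{n−1}; and for all natural numbers n and j with j ≥ 2 and n ≥ j, q_{nj} = (n−1)·C_{n−1} + ∑_{k=1}^{⌊(j−1)/2⌋} (−1)^k · [ (n−1−k)·(binom(j−1−k, k) + binom(j−2−k, k−1)) + binom(j−2−k, k−1) ] · C_{n−1−k}. -/
open PowerSeries Finset

/-- The generating function `W(x) = ∑ binom(2n,n) xⁿ` of the central binomial coefficients. -/
noncomputable def centralBinomGF : PowerSeries ℝ :=
  PowerSeries.mk fun n => ((2 * n).choose n : ℝ)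

/-- `q i j` is the coefficient of `x^i` in `W(x)·(xC(x))^j`, i.e. the `(i,j)` entry of
`D(𝕃^S)⁻¹D`. -/
noncomputable def qEntry (i j : ℕ) : ℝ :=
  PowerSeries.coeff i (centralBinomGF * (PowerSeries.X * catalanGF) ^ j)

/-!
Write `T = x·C(x)`. Catalan's equation `C = 1 + x·C²` reads `T² = T − x`, so
`W·T^(j+2) = W·T^(j+1) − x·W·T^j`, i.e. `q_{n+1,j+2} = q_{n+1,j+1} − q_{n,j}`. Since
`W = T'`, differentiating `T² = T − x` gives `W·(1 − 2T) = 1`, so `2 q_{n,1} = binom(2n,n)`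
for `n ≥ 1`, and `binom(2n,n) = 2(2n−1)C_{n−1}`. The right-hand side of the formula obeys the
same recurrence in `j`, term by term by Pascal's rule, and agrees with `q` for `j = 2, 3`.
-/

theorem catalanGF_eq_map : catalanGF = PowerSeries.map (Nat.castRingHom ℝ) catalanSeries := by
  ext n; simp [catalanGF, catalanSeries]

theorem X_mul_catalanGF_sq : (X * catalanGF) ^ 2 = X * catalanGF - X := by
  have h := congrArg (PowerSeries.map (Nat.castRingHom ℝ)) catalanSeries_sq_mul_X_add_one
  simp only [map_add, map_mul, map_pow, map_X, map_one, ← catalanGF_eq_map] at h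
  linear_combination X * h

theorem coeff_centralBinomGF (n : ℕ) : coeff n centralBinomGF = n.centralBinom := by
  simp [centralBinomGF, Nat.centralBinom_eq_two_mul_choose]

theorem centralBinomGF_eq_derivative : centralBinomGF = d⁄dX ℝ (X * catalanGF) := by
  ext n
  rw [coeff_centralBinomGF, coeff_derivative, coeff_succ_X_mul, ← succ_mul_catalan_eq_centralBinom]
  simp only [catalanGF, coeff_mk]
  push_cast
  ring

theorem centralBinomGF_mul_one_sub : centralBinomGF * (1 - 2 * (X * catalanGF)) = 1 := by
  have h := congrArg (d⁄dX ℝ) X_mul_catalanGF_sq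
  rw [Derivation.leibniz_pow, map_sub, derivative_X, ← centralBinomGF_eq_derivative] at h
  simp only [nsmul_eq_mul, smul_eq_mul] at h
  linear_combination -h

theorem Nat.centralBinom_succ_eq_mul_catalan (n : ℕ) :
    (n + 1).centralBinom = 2 * (2 * n + 1) * catalan n := by
  apply Nat.eq_of_mul_eq_mul_left (show 0 < n + 1 by omega)
  rw [Nat.succ_mul_centralBinom_succ, ← succ_mul_catalan_eq_centralBinom]
  ring

theorem qEntry_zero (n : ℕ) : qEntry n 0 = (n + 1) * catalan n := by
  simp [qEntry, coeff_centralBinomGF, ← succ_mul_catalan_eq_centralBinom]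

theorem qEntry_succ_one (n : ℕ) : qEntry (n + 1) 1 = (2 * n + 1) * catalan n := by
  have h : (2 : ℝ) • (centralBinomGF * (X * catalanGF) ^ 1) = centralBinomGF - 1 := by
    rw [two_smul]
    linear_combination -centralBinomGF_mul_one_sub
  have hc := congrArg (coeff (n + 1)) h
  rw [map_smul, map_sub, coeff_centralBinomGF, Nat.centralBinom_succ_eq_mul_catalan, coeff_one,
    if_neg n.succ_ne_zero, smul_eq_mul] at hc
  rw [qEntry]
  push_cast at hc
  linear_combination hc / 2

theorem qEntry_succ_add_two (n j : ℕ) :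
    qEntry (n + 1) (j + 2) = qEntry (n + 1) (j + 1) - qEntry n j := by
  have h : centralBinomGF * (X * catalanGF) ^ (j + 2) =
      centralBinomGF * (X * catalanGF) ^ (j + 1) - X * (centralBinomGF * (X * catalanGF) ^ j) := by
    linear_combination centralBinomGF * (X * catalanGF) ^ j * X_mul_catalanGF_sq
  simpa [qEntry, coeff_succ_X_mul] using congrArg (coeff (n + 1)) h

theorem Finset.sum_Icc_one_eq_sum_range {M : Type*} [AddCommMonoid M] (f : ℕ → M) (m : ℕ) :
    ∑ k ∈ Icc 1 m, f k = ∑ k ∈ range m, f (k + 1) := by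
  rw [range_eq_Ico, Finset.sum_Ico_add', zero_add, Finset.Ico_add_one_right_eq_Icc]

noncomputable def qFormulaTerm (n j k : ℕ) : ℝ :=
  (-1 : ℝ) ^ k *
    (((n - 1 - k : ℕ) : ℝ) * (((j - 1 - k).choose k : ℝ) + ((j - 2 - k).choose (k - 1) : ℝ)) +
      ((j - 2 - k).choose (k - 1) : ℝ)) *
    (catalan (n - 1 - k) : ℝ)

noncomputable def qFormula (n j : ℕ) : ℝ :=
  ((n - 1 : ℕ) : ℝ) * (catalan (n - 1) : ℝ) + ∑ k ∈ Icc 1 ((j - 1) / 2), qFormulaTerm n j k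

-- At `j = 2`, truncated subtraction makes `(j - 2 - 1).choose 0 = 1`, so the term at `k = 1`
-- does not vanish.
theorem qFormulaTerm_eq_zero {n j k : ℕ} (hj : 3 ≤ j) (hk : (j - 1) / 2 < k) :
    qFormulaTerm n j k = 0 := by
  simp [qFormulaTerm, Nat.choose_eq_zero_of_lt (show j - 1 - k < k by omega),
    Nat.choose_eq_zero_of_lt (show j - 2 - k < k - 1 by omega)]

theorem sum_Icc_qFormulaTerm_of_le {n j m : ℕ} (hj : 3 ≤ j) (hm : (j - 1) / 2 ≤ m) :
    ∑ k ∈ Icc 1 m, qFormulaTerm n j k = ∑ k ∈ Icc 1 ((j - 1) / 2), qFormulaTerm n j k := by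
  refine (Finset.sum_subset (Icc_subset_Icc_right hm) fun k hkm hk => ?_).symm
  exact qFormulaTerm_eq_zero hj (by simp only [mem_Icc] at hkm hk; omega)

theorem qFormulaTerm_succ_add_two_one {n j : ℕ} (hj : 1 ≤ j) :
    qFormulaTerm (n + 1) (j + 2) 1 =
      qFormulaTerm (n + 1) (j + 1) 1 - ((n - 1 : ℕ) : ℝ) * (catalan (n - 1) : ℝ) := by
  obtain ⟨i, rfl⟩ := Nat.exists_eq_add_of_le' hj
  simp only [qFormulaTerm, Nat.add_sub_cancel, Nat.reduceSub, Nat.choose_one_right,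
    Nat.choose_zero_right]
  push_cast
  ring

theorem qFormulaTerm_succ_add_two_add_two {n j k : ℕ} (hk : 2 * (k + 1) < j) :
    qFormulaTerm (n + 1) (j + 2) (k + 2) =
      qFormulaTerm (n + 1) (j + 1) (k + 2) - qFormulaTerm n j (k + 1) := by
  obtain ⟨a, rfl⟩ : ∃ a, j = a + k + 3 := ⟨j - k - 3, by omega⟩
  have pascal₁ := Nat.choose_succ_succ' (a + 1) (k + 1)
  have pascal₂ := Nat.choose_succ_succ' a k
  rw [qFormulaTerm, qFormulaTerm, qFormulaTerm,
    show a + k + 3 + 2 - 1 - (k + 2) = a + 2 by omega,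
    show a + k + 3 + 2 - 2 - (k + 2) = a + 1 by omega,
    show a + k + 3 + 1 - 1 - (k + 2) = a + 1 by omega,
    show a + k + 3 + 1 - 2 - (k + 2) = a by omega,
    show a + k + 3 - 1 - (k + 1) = a + 1 by omega, show a + k + 3 - 2 - (k + 1) = a by omega,
    show n + 1 - 1 - (k + 2) = n - 1 - (k + 1) by omega, show k + 2 - 1 = k + 1 by omega,
    Nat.add_sub_cancel, pascal₁, pascal₂]
  push_cast
  ring

theorem qFormula_succ_add_two {n j : ℕ} (hj : 2 ≤ j) :
    qFormula (n + 1) (j + 2) = qFormula (n + 1) (j + 1) - qFormula n j := by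
  have hK : (j + 2 - 1) / 2 = (j - 1) / 2 + 1 := by omega
  rw [qFormula, qFormula, qFormula, hK,
    ← sum_Icc_qFormulaTerm_of_le (j := j + 1) (m := (j - 1) / 2 + 1) (by omega) (by omega)]
  simp only [Finset.sum_Icc_one_eq_sum_range, Finset.sum_range_succ']
  rw [qFormulaTerm_succ_add_two_one (by omega), Finset.sum_congr rfl fun k hk =>
      qFormulaTerm_succ_add_two_add_two (n := n) (by simp only [mem_range] at hk; omega),
    Finset.sum_sub_distrib]
  simp only [Nat.add_sub_cancel]
  ring

theorem qFormula_two (n : ℕ) : qFormula n 2 = ((n - 1 : ℕ) : ℝ) * (catalan (n - 1) : ℝ) := by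
  simp [qFormula]

theorem qFormula_three (n : ℕ) :
    qFormula (n + 2) 3 = qFormula (n + 2) 2 - (2 * n + 1) * catalan n := by
  have hterm : qFormulaTerm (n + 2) 3 1 = -((2 * n + 1) * catalan n) := by
    simp only [qFormulaTerm, Nat.reduceSub, Nat.choose_one_right, Nat.choose_zero_right]
    push_cast
    ring
  rw [qFormula_two, qFormula, show (3 - 1) / 2 = 1 from rfl, Icc_self, sum_singleton, hterm]
  ring

theorem qEntry_eq_qFormula : ∀ j n : ℕ, 2 ≤ j → j ≤ n → qEntry n j = qFormula n j
  | 2, n + 1, _, _ => by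
    rw [qEntry_succ_add_two n 0, qEntry_succ_one, qEntry_zero, qFormula_two, Nat.add_sub_cancel]
    ring
  | 3, n + 2, _, _ => by
    rw [qEntry_succ_add_two (n + 1) 1, qEntry_eq_qFormula 2 (n + 2) le_rfl (by omega),
      qEntry_succ_one, qFormula_three]
  | j + 4, n + 1, _, hn => by
    have h₁ := qEntry_eq_qFormula (j + 3) (n + 1) (by omega) (by omega)
    have h₂ := qEntry_eq_qFormula (j + 2) n (by omega) (by omega)
    rw [qEntry_succ_add_two n (j + 2), h₁, h₂, qFormula_succ_add_two (j := j + 2) (by omega)]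

/-- `q_{n1} = (2n−1)·C_{n−1}` for `n ≥ 1`, and for `j ≥ 2`, `n ≥ j`,
`q_{nj} = (n−1)·C_{n−1} + ∑_{k=1}^{⌊(j−1)/2⌋} (−1)^k ·
  [(n−1−k)·(binom(j−1−k,k) + binom(j−2−k,k−1)) + binom(j−2−k,k−1)] · C_{n−1−k}`. -/
theorem stmt_10 :
    (∀ n : ℕ, 1 ≤ n →
      qEntry n 1 = ((2 * n - 1 : ℕ) : ℝ) * (catalan (n - 1) : ℝ)) ∧
    (∀ n j : ℕ, 2 ≤ j → j ≤ n →
      qEntry n j =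
        ((n - 1 : ℕ) : ℝ) * (catalan (n - 1) : ℝ) +
          ∑ k ∈ Finset.Icc 1 ((j - 1) / 2),
            (-1 : ℝ) ^ k *
              (((n - 1 - k : ℕ) : ℝ) *
                  (((j - 1 - k).choose k : ℝ) + ((j - 2 - k).choose (k - 1) : ℝ)) +
                ((j - 2 - k).choose (k - 1) : ℝ)) *
              (catalan (n - 1 - k) : ℝ)) := by
  refine ⟨fun n hn => ?_, fun n j hj hjn => qEntry_eq_qFormula j n hj hjn⟩
  obtain ⟨m, rfl⟩ := Nat.exists_eq_add_of_le' hn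
  rw [qEntry_succ_one, show 2 * (m + 1) - 1 = 2 * m + 1 by omega, Nat.add_sub_cancel]
  push_cast
  ring
end
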